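/- arXiv:1307.7793 — 3 statements merged into one kernel-verified Lean document; each statement's English description precedes it below -/
import Mathlib

section
/- For every value b' in the image of the characteristic set under H (i.e., b' = H(x) for some x ∈ χ_g), there exists x* ∈ χ_g with H(x*) = b' and f(x*) = min{ f(x) : x ∈ {0,1}^n, H(x) = b' }; that is, every constraint instance realized by the characteristic set is solved exactly by some element of the characteristic set. -/
/-! On the fibre `{x | H x = b'}` the Lagrangian `L(·, λ)` is `f` plus the constant
`λᵀ(b' - b)`. Hence if a point `x₀` of the fibre minimises `L(·, λ)` over all of `{0,1}ⁿ`, so does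
every minimiser of `f` on the (finite, nonempty) fibre. -/

open Set

theorem IsMinOn.of_eqOn_add_const {α β : Type*} [AddCommMonoid β] [PartialOrder β]
    [IsOrderedAddMonoid β] {ψ f : α → β} {S : Set α} {c : β} (hψ : ∀ x ∈ S, ψ x = f x + c)
    {x₀ x : α} (hx₀S : x₀ ∈ S) (hx₀ : IsMinOn ψ univ x₀) (hxS : x ∈ S) (hx : IsMinOn f S x) :
    IsMinOn ψ univ x := fun y _ =>
  calc ψ x = f x + c := hψ x hxS
    _ ≤ f x₀ + c := add_le_add_left (hx hx₀S) c
    _ = ψ x₀ := (hψ x₀ hx₀S).symm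
    _ ≤ ψ y := hx₀ (mem_univ y)

theorem stmt_1_general (n m : ℕ)
    (f : (Fin n → Bool) → ℝ) (H : (Fin n → Bool) → (Fin m → ℝ)) (b : Fin m → ℝ)
    (L : (Fin n → Bool) → (Fin m → ℝ) → ℝ)
    (hL : ∀ x lam, L x lam = f x + ∑ i, lam i * (H x i - b i))
    (chi : Set (Fin n → Bool))
    (hchi : chi = {x | ∃ lam : Fin m → ℝ, ∀ y : Fin n → Bool, L x lam ≤ L y lam})
    (b' : Fin m → ℝ) (hb' : b' ∈ H '' chi) :
    ∃ xstar ∈ chi, H xstar = b' ∧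
      IsLeast (f '' {x : Fin n → Bool | H x = b'}) (f xstar) := by
  subst hchi
  obtain ⟨x₀, ⟨lam, hx₀⟩, rfl⟩ := hb'
  set S := {x | H x = H x₀}
  obtain ⟨xs, hxsS, hxs⟩ := S.exists_min_image f S.toFinite ⟨x₀, rfl⟩
  have hL_fiber : ∀ x ∈ S, L x lam = f x + ∑ i, lam i * (H x₀ i - b i) := by
    intro x hx
    rw [hL, show H x = H x₀ from hx]
  have hxs_min : IsMinOn (L · lam) univ xs :=
    IsMinOn.of_eqOn_add_const hL_fiber rfl (isMinOn_univ_iff.2 hx₀) hxsS hxs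
  exact ⟨xs, ⟨lam, isMinOn_univ_iff.1 hxs_min⟩, hxsS,
    mem_image_of_mem f hxsS, forall_mem_image.2 hxs⟩

/-- Every constraint instance `b'` realized by the characteristic set
`χ_g = ⋃_{λ} argmin_x L(x,λ)` is solved exactly by some element of the characteristic set:
there is `x* ∈ χ_g` with `H(x*) = b'` and `f(x*) = min { f(x) : H(x) = b' }`. -/
theorem stmt_1 (n m : ℕ) (hn : 0 < n) (hm : 0 < m)
    (f : (Fin n → Bool) → ℝ) (H : (Fin n → Bool) → (Fin m → ℝ)) (b : Fin m → ℝ)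
    (L : (Fin n → Bool) → (Fin m → ℝ) → ℝ)
    (hL : ∀ x lam, L x lam = f x + ∑ i, lam i * (H x i - b i))
    (chi : Set (Fin n → Bool))
    (hchi : chi = {x | ∃ lam : Fin m → ℝ, ∀ y : Fin n → Bool, L x lam ≤ L y lam})
    (b' : Fin m → ℝ) (hb' : b' ∈ H '' chi) :
    ∃ xstar ∈ chi, H xstar = b' ∧
      IsLeast (f '' {x : Fin n → Bool | H x = b'}) (f xstar) :=
  stmt_1_general n m f H b L hL chi hchi b' hb'
end

section
/- Elements of the characteristic set with equal constraint values have equal objective values: if x₁, x₂ ∈ χ_g and H(x₁) = H(x₂), then f(x₁) = f(x₂). -/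
theorem eq_of_minimizes_add_comp_of_eq {α γ β : Type*} [AddCommGroup β] [LinearOrder β]
    [IsOrderedAddMonoid β] {f : α → β} {H : α → γ} {P Q : γ → β} {x₁ x₂ : α}
    (h₁ : ∀ y, f x₁ + P (H x₁) ≤ f y + P (H y)) (h₂ : ∀ y, f x₂ + Q (H x₂) ≤ f y + Q (H y))
    (hH : H x₁ = H x₂) : f x₁ = f x₂ := by
  apply le_antisymm
  · simpa [hH] using h₁ x₂
  · simpa [hH] using h₂ x₁

theorem stmt_9_general (n m : ℕ)
    (f : (Fin n → Bool) → ℝ) (H : (Fin n → Bool) → (Fin m → ℝ)) (b : Fin m → ℝ)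
    (L : (Fin n → Bool) → (Fin m → ℝ) → ℝ)
    (hL : ∀ x lam, L x lam = f x + ∑ i, lam i * (H x i - b i))
    (chi : Set (Fin n → Bool))
    (hchi : chi = {x | ∃ lam : Fin m → ℝ, ∀ y : Fin n → Bool, L x lam ≤ L y lam})
    (x₁ x₂ : Fin n → Bool) (h₁ : x₁ ∈ chi) (h₂ : x₂ ∈ chi)
    (hH : H x₁ = H x₂) :
    f x₁ = f x₂ := by
  subst hchi
  obtain ⟨l₁, hl₁⟩ := h₁
  obtain ⟨l₂, hl₂⟩ := h₂
  simp only [hL] at hl₁ hl₂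
  exact eq_of_minimizes_add_comp_of_eq (P := fun h ↦ ∑ i, l₁ i * (h i - b i))
    (Q := fun h ↦ ∑ i, l₂ i * (h i - b i)) hl₁ hl₂ hH

/-- Elements of the characteristic set with equal constraint values have equal
objective values: if `x₁, x₂ ∈ χ_g` and `H(x₁) = H(x₂)` then `f(x₁) = f(x₂)`. -/
theorem stmt_9 (n m : ℕ) (hn : 0 < n) (hm : 0 < m)
    (f : (Fin n → Bool) → ℝ) (H : (Fin n → Bool) → (Fin m → ℝ)) (b : Fin m → ℝ)
    (L : (Fin n → Bool) → (Fin m → ℝ) → ℝ)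
    (hL : ∀ x lam, L x lam = f x + ∑ i, lam i * (H x i - b i))
    (chi : Set (Fin n → Bool))
    (hchi : chi = {x | ∃ lam : Fin m → ℝ, ∀ y : Fin n → Bool, L x lam ≤ L y lam})
    (x₁ x₂ : Fin n → Bool) (h₁ : x₁ ∈ chi) (h₂ : x₂ ∈ chi)
    (hH : H x₁ = H x₂) :
    f x₁ = f x₂ :=
  stmt_9_general n m f H b L hL chi hchi x₁ x₂ h₁ h₂ hH
end

section
/- Slack-variable lemma for inequality constraints: suppose (x*, y*) ∈ {0,1}^n × ∏_{i=1}^m [0, k_i] satisfies L̂(x*, y*, λ*) = ĝ(λ*) for some λ* ∈ ℝ^m, and let b* = H(x*) + y*. Then f(x*) = min{ f(x) : x ∈ {0,1}^n, b* − k ≤ H(x) ≤ b* componentwise }. -/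
/-!
For `x` with `b* − k ≤ H x ≤ b*`, the slack `y = b* − H x` lies in the box `∏ᵢ [0, kᵢ]` and makes
`H x + y = H x* + y*`. The penalty term `λ*ᵀ(H + y − b̄)` is then the same at `(x, y)` as at
`(x*, y*)`, so minimality of the Lagrangian at `(x*, y*)` reduces to `f x* ≤ f x`.
-/

open Set

/-- The paper's `L̂`, with slack variables `y` for the inequality constraints. -/
def slackLagrangian {X ι : Type*} [Fintype ι] (f : X → ℝ) (H : X → ι → ℝ) (bbar : ι → ℝ)
    (x : X) (y lam : ι → ℝ) : ℝ :=
  f x + ∑ i, lam i * (H x i + y i - bbar i)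

theorem slackLagrangian_eq_of_add_eq {X ι : Type*} [Fintype ι] (f : X → ℝ) (H : X → ι → ℝ)
    (bbar : ι → ℝ) {x x' : X} {y y' : ι → ℝ} (lam : ι → ℝ) (h : ∀ i, H x i + y i = H x' i + y' i) :
    slackLagrangian f H bbar x y lam = slackLagrangian f H bbar x' y' lam + (f x - f x') := by
  simp only [slackLagrangian, h]
  ring

theorem isLeast_of_isMin_slackLagrangian {X ι : Type*} [Fintype ι] (f : X → ℝ)
    (H : X → ι → ℝ) (bbar k lam : ι → ℝ) (xstar : X) (ystar : ι → ℝ)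
    (hystar : ∀ i, ystar i ∈ Icc 0 (k i))
    (hmin : ∀ x (y : ι → ℝ), (∀ i, y i ∈ Icc 0 (k i)) →
      slackLagrangian f H bbar xstar ystar lam ≤ slackLagrangian f H bbar x y lam) :
    IsLeast (f '' {x | ∀ i, H xstar i + ystar i - k i ≤ H x i ∧ H x i ≤ H xstar i + ystar i})
      (f xstar) := by
  refine ⟨⟨xstar, fun i => ?_, rfl⟩, ?_⟩
  · obtain ⟨hy₀, hyk⟩ := hystar i
    constructor <;> linarith
  · rintro _ ⟨x, hx, rfl⟩
    set y : ι → ℝ := fun i => H xstar i + ystar i - H x i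
    have hy : ∀ i, y i ∈ Icc 0 (k i) := fun i => by
      obtain ⟨hlo, hhi⟩ := hx i
      constructor <;> simp only [y] <;> linarith
    have hL : slackLagrangian f H bbar x y lam =
        slackLagrangian f H bbar xstar ystar lam + (f x - f xstar) :=
      slackLagrangian_eq_of_add_eq f H bbar lam fun i => add_sub_cancel _ _
    linarith [hmin x y hy]

theorem stmt_10_general (n m : ℕ)
    (f : (Fin n → Bool) → ℝ) (H : (Fin n → Bool) → (Fin m → ℝ))
    (bbar k : Fin m → ℝ)
    (Lhat : (Fin n → Bool) → (Fin m → ℝ) → (Fin m → ℝ) → ℝ)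
    (hLhat : ∀ x y lam, Lhat x y lam = f x + ∑ i, lam i * (H x i + y i - bbar i))
    (xstar : Fin n → Bool) (ystar : Fin m → ℝ) (lamstar : Fin m → ℝ)
    (hystar : ∀ i, ystar i ∈ Set.Icc 0 (k i))
    (hmin : ∀ (x : Fin n → Bool) (y : Fin m → ℝ), (∀ i, y i ∈ Set.Icc 0 (k i)) →
        Lhat xstar ystar lamstar ≤ Lhat x y lamstar)
    (bstar : Fin m → ℝ) (hbstar : bstar = fun i => H xstar i + ystar i) :
    IsLeast (f '' {x : Fin n → Bool | ∀ i, bstar i - k i ≤ H x i ∧ H x i ≤ bstar i})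
      (f xstar) := by
  have hLhat' : Lhat = slackLagrangian f H bbar := by
    funext x y lam
    exact hLhat x y lam
  subst hLhat' hbstar
  exact isLeast_of_isMin_slackLagrangian f H bbar k lamstar xstar ystar hystar hmin

/-- Slack-variable lemma for inequality constraints. If
`(x*, y*) ∈ {0,1}^n × ∏ᵢ [0,kᵢ]` attains the dual value
`ĝ(λ*) = min_{x,y} L̂(x,y,λ*)` where `L̂(x,y,λ) = f(x) + λᵀ(H(x) + y − b̄)`, and
`b* = H(x*) + y*`, then `f(x*) = min { f(x) : b* − k ≤ H(x) ≤ b* componentwise }`. -/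
theorem stmt_10 (n m : ℕ) (hn : 0 < n) (hm : 0 < m)
    (f : (Fin n → Bool) → ℝ) (H : (Fin n → Bool) → (Fin m → ℝ))
    (bbar k : Fin m → ℝ) (hk : ∀ i, 0 ≤ k i)
    (Lhat : (Fin n → Bool) → (Fin m → ℝ) → (Fin m → ℝ) → ℝ)
    (hLhat : ∀ x y lam, Lhat x y lam = f x + ∑ i, lam i * (H x i + y i - bbar i))
    (xstar : Fin n → Bool) (ystar : Fin m → ℝ) (lamstar : Fin m → ℝ)
    (hystar : ∀ i, ystar i ∈ Set.Icc 0 (k i))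
    (hmin : ∀ (x : Fin n → Bool) (y : Fin m → ℝ), (∀ i, y i ∈ Set.Icc 0 (k i)) →
        Lhat xstar ystar lamstar ≤ Lhat x y lamstar)
    (bstar : Fin m → ℝ) (hbstar : bstar = fun i => H xstar i + ystar i) :
    IsLeast (f '' {x : Fin n → Bool | ∀ i, bstar i - k i ≤ H x i ∧ H x i ≤ bstar i})
      (f xstar) :=
  stmt_10_general n m f H bbar k Lhat hLhat xstar ystar lamstar hystar hmin bstar hbstar
end
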